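/- Let (Ω, 𝒢) be a measurable space, X a random variable on Ω, and φ = (φ₁,…,φ_D) : Ω → ℝ^D a measurable map with φ₁ ≡ 1 and E[‖φ(X)‖] < ∞. Then there exist n ≤ D points x₁,…,x_n ∈ Ω and positive weights λ₁,…,λ_n summing to 1 such that E[φᵢ(X)] = Σⱼ λⱼ φᵢ(xⱼ) for all i = 1,…,D, and moreover the points can be chosen so that φ(xⱼ) lies in the support of the distribution of φ(X) for each j. -/

import Mathlib

/-!
The barycenter `m` of the law `ν` of `φ(X)` lies in the convex hull of every set `E` that meets
all sets of positive `ν`-measure, for instance `range φ ∩ supp ν`. Otherwise `m`, which lies in the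
affine span of `E`, is weakly separated from `E` by a functional `F` that is not constant on `E`;
as `F ≥ F m` on `E`, hence `ν`-a.s., and `∫ F dν = F m`, the measure `ν` lives on the hyperplane
`{F = F m}`, and the trace of `E` on it is a set of the same kind with a smaller affine span.
Carathéodory's theorem then writes `m` as a convex combination with positive weights of affinely
independent points of `E`; as these lie on the hyperplane `{y₀ = 1}` they are linearly independent,
so there are at most `D` of them.
-/

open MeasureTheory

/-- The support of a measure: the set of points all of whose neighborhoods have
positive measure (the smallest closed set of full measure). -/
def measureSupport {E : Type*} [TopologicalSpace E] [MeasurableSpace E] (ν : Measure E) :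
    Set E := {x | ∀ U ∈ nhds x, 0 < ν U}

open Set
open scoped Pointwise

section Separation

lemma affineSpan_add_eq_top {k W : Type*} [Ring k] [AddCommGroup W] [Module k W] {s : Set W}
    (hs : s.Nonempty) {K : Submodule k W} (hK : vectorSpan k s ⊔ K = ⊤) :
    affineSpan k (s + (K : Set W)) = ⊤ := by
  obtain ⟨c, hc⟩ := hs
  have hcK : c ∈ s + (K : Set W) := ⟨c, hc, 0, K.zero_mem, add_zero c⟩
  rw [AffineSubspace.affineSpan_eq_top_iff_vectorSpan_eq_top_of_nonempty k W W ⟨c, hcK⟩,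
    eq_top_iff, ← hK]
  refine sup_le (vectorSpan_mono k fun y hy => ⟨y, hy, 0, K.zero_mem, add_zero y⟩) fun v hv => ?_
  simpa using vsub_mem_vectorSpan k (add_mem_add hc hv : c + v ∈ s + (K : Set W)) hcK

variable {V : Type*} [NormedAddCommGroup V] [NormedSpace ℝ V] [FiniteDimensional ℝ V]

theorem exists_le_lt_of_mem_affineSpan_of_notMem_convexHull {E : Set V} {m : V}
    (hmA : m ∈ affineSpan ℝ E) (hm : m ∉ convexHull ℝ E) :
    ∃ F : V →L[ℝ] ℝ, (∀ y ∈ E, F m ≤ F y) ∧ ∃ e ∈ E, F m < F e := by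
  obtain ⟨c, hc⟩ := (affineSpan_nonempty ℝ).1 ⟨m, hmA⟩
  -- thickening the hull by a complement of its direction gives a convex set with nonempty
  -- interior which still avoids `m`
  obtain ⟨K, hK⟩ := Submodule.exists_isCompl (vectorSpan ℝ E)
  set C := convexHull ℝ E + (K : Set V)
  have hC : Convex ℝ C := (convex_convexHull ℝ E).add K.convex
  have hEC : E ⊆ C := fun y hy => ⟨y, subset_convexHull ℝ E hy, 0, K.zero_mem, add_zero y⟩
  have hmC : m ∉ interior C := by
    intro hmC
    obtain ⟨h, hh, k, hk, rfl⟩ := interior_subset hmC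
    have hkE : k ∈ vectorSpan ℝ E := by
      simpa [direction_affineSpan] using
        AffineSubspace.vsub_mem_direction hmA (convexHull_subset_affineSpan E hh)
    have hk0 : k = 0 := Submodule.disjoint_def.1 hK.disjoint k hkE hk
    exact hm (by simpa [hk0] using hh)
  have hCint : (interior C).Nonempty := by
    rw [hC.interior_nonempty_iff_affineSpan_eq_top]
    refine affineSpan_add_eq_top ⟨c, subset_convexHull ℝ E hc⟩ ?_
    rw [← direction_affineSpan, affineSpan_convexHull, direction_affineSpan]
    exact hK.sup_eq_top
  obtain ⟨f, hf0, hfC⟩ := geometric_hahn_banach_of_nonempty_interior_point hC hmC hCint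
  refine ⟨-f, fun y hy => by simpa using hfC y (hEC hy), ?_⟩
  by_contra! hconst
  -- otherwise `f` vanishes on `vectorSpan ℝ E` and, being bounded above on `c + K`, on `K`
  have hfE : ∀ y ∈ E, f y = f m := fun y hy =>
    le_antisymm (hfC y (hEC hy)) (by simpa using hconst y hy)
  have hW : vectorSpan ℝ E ≤ LinearMap.ker (f : V →ₗ[ℝ] ℝ) := by
    rw [vectorSpan_def, Submodule.span_le]
    rintro _ ⟨y₁, hy₁, y₂, hy₂, rfl⟩
    simp [hfE y₁ hy₁, hfE y₂ hy₂]
  have hKf : K ≤ LinearMap.ker (f : V →ₗ[ℝ] ℝ) := by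
    intro k hk
    have h₁ := hfC (c + k) ⟨c, subset_convexHull ℝ E hc, k, hk, rfl⟩
    have h₂ := hfC (c + -k) ⟨c, subset_convexHull ℝ E hc, -k, K.neg_mem hk, rfl⟩
    simp only [map_add, map_neg, hfE c hc] at h₁ h₂
    simp only [LinearMap.mem_ker, ContinuousLinearMap.coe_coe]
    linarith
  have hker : LinearMap.ker (f : V →ₗ[ℝ] ℝ) = ⊤ := top_le_iff.1 (hK.sup_eq_top ▸ sup_le hW hKf)
  exact hf0 (ContinuousLinearMap.coe_injective (LinearMap.ker_eq_top.1 hker))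

end Separation

section Thick

variable {α : Type*} [MeasurableSpace α]

/-- `E` meets every measurable set of positive measure. As `E` need not be measurable (a range
typically is not), this is weaker than `ν Eᶜ = 0`. -/
def IsThick (ν : Measure α) (E : Set α) : Prop :=
  ∀ A, MeasurableSet A → ν A ≠ 0 → (A ∩ E).Nonempty

lemma isThick_map_range {Ω : Type*} [MeasurableSpace Ω] {μ : Measure Ω} {f : Ω → α}
    (hf : Measurable f) : IsThick (μ.map f) (range f) := by
  intro A hA hA0
  rw [Measure.map_apply hf hA] at hA0
  obtain ⟨ω, hω⟩ := nonempty_of_measure_ne_zero hA0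
  exact ⟨f ω, hω, mem_range_self ω⟩

namespace IsThick

variable {ν : Measure α} {E : Set α}

lemma nonempty [NeZero ν] (hE : IsThick ν E) : E.Nonempty := by
  simpa using hE univ MeasurableSet.univ (NeZero.ne _)

lemma ae_mem (hE : IsThick ν E) {S : Set α} (hS : MeasurableSet S) (hES : E ⊆ S) :
    ∀ᵐ y ∂ν, y ∈ S := by
  by_contra h
  obtain ⟨y, hyS, hyE⟩ := hE Sᶜ hS.compl h
  exact hyS (hES hyE)

lemma inter (hE : IsThick ν E) {H : Set α} (hH : MeasurableSet H) (hH0 : ν Hᶜ = 0) :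
    IsThick ν (E ∩ H) := by
  intro A hA hA0
  obtain ⟨y, ⟨hyA, hyH⟩, hyE⟩ := hE (A ∩ H) (hA.inter hH) (by rwa [measure_inter_conull hH0])
  exact ⟨y, hyA, hyE, hyH⟩

end IsThick

end Thick

section Barycenter

variable {V : Type*} [NormedAddCommGroup V] [NormedSpace ℝ V] [FiniteDimensional ℝ V]
  [MeasurableSpace V] [BorelSpace V] {ν : Measure V} [IsProbabilityMeasure ν] {E : Set V}

theorem IsThick.exists_vectorSpan_lt (hi : Integrable id ν) (hE : IsThick ν E)
    (hm : ∫ y, y ∂ν ∉ convexHull ℝ E) :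
    ∃ E' ⊆ E, IsThick ν E' ∧ vectorSpan ℝ E' < vectorSpan ℝ E := by
  set m := ∫ y, y ∂ν
  have hA : IsClosed (affineSpan ℝ E : Set V) := (affineSpan ℝ E).closed_of_finiteDimensional
  have hmA : m ∈ affineSpan ℝ E := (affineSpan ℝ E).convex.integral_mem hA
    (hE.ae_mem hA.measurableSet (subset_affineSpan ℝ E)) hi
  obtain ⟨F, hFE, e, he, hFe⟩ := exists_le_lt_of_mem_affineSpan_of_notMem_convexHull hmA hm
  have hFm : ∀ᵐ y ∂ν, F m = F y := by
    have hle : ∀ᵐ y ∂ν, F m ≤ F y :=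
      hE.ae_mem (isClosed_le continuous_const F.continuous).measurableSet hFE
    refine (integral_eq_iff_of_ae_le (integrable_const _) (F.integrable_comp hi) hle).1 ?_
    simpa [m] using (F.integral_comp_comm hi).symm
  set H := {y | F y = F m}
  have hEH : IsThick ν (E ∩ H) := hE.inter (measurableSet_eq_fun F.measurable measurable_const)
    (ae_iff.1 (hFm.mono fun y hy => hy.symm))
  obtain ⟨c, hcE, hcH⟩ := hEH.nonempty
  refine ⟨E ∩ H, inter_subset_left, hEH,
    lt_of_le_of_ne (vectorSpan_mono ℝ inter_subset_left) fun heq => ?_⟩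
  have hker : vectorSpan ℝ (E ∩ H) ≤ LinearMap.ker (F : V →ₗ[ℝ] ℝ) := by
    rw [vectorSpan_def, Submodule.span_le]
    rintro _ ⟨y₁, ⟨-, hy₁⟩, y₂, ⟨-, hy₂⟩, rfl⟩
    simp_all [H]
  have hec := hker (heq ▸ vsub_mem_vectorSpan ℝ he hcE)
  simp only [vsub_eq_sub, LinearMap.mem_ker, ContinuousLinearMap.coe_coe, map_sub] at hec
  simp only [H, mem_ofPred_eq] at hcH
  linarith

theorem integral_id_mem_convexHull_of_isThick (hi : Integrable id ν) (hE : IsThick ν E) :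
    ∫ y, y ∂ν ∈ convexHull ℝ E := by
  induction h : vectorSpan ℝ E using WellFoundedLT.induction generalizing E with
  | _ W ih =>
    by_contra hm
    obtain ⟨E', hE'E, hE', hlt⟩ := hE.exists_vectorSpan_lt hi hm
    exact hm (convexHull_mono hE'E (ih _ (h ▸ hlt) hE' rfl))

end Barycenter

theorem AffineIndependent.linearIndependent_of_forall_eq_one {k W ι : Type*} [Ring k]
    [AddCommGroup W] [Module k W] {z : ι → W} (hz : AffineIndependent k z) (ℓ : W →ₗ[k] k)
    (hℓ : ∀ i, ℓ (z i) = 1) : LinearIndependent k z := by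
  rw [linearIndependent_iff']
  intro s g hg
  refine affineIndependent_iff.1 hz s g ?_ hg
  simpa [hℓ] using congrArg ℓ hg

theorem measureSupport_eq_support {X : Type*} [TopologicalSpace X] [MeasurableSpace X]
    (ν : Measure X) : measureSupport ν = ν.support := by
  ext x
  simp [measureSupport, Measure.mem_support_iff_forall]

/-- **Generalized Tchakaloff theorem.**  Given a random variable `X` with law `μ` on a
measurable space `Ω` and an integrable vector of test functions `φ : Ω → ℝ^D` with
`φ₁ ≡ 1`, there is a cubature formula with at most `D` nodes, whose nodes may be chosen
so that their `φ`-images lie in the support of the law of `φ(X)`. -/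
theorem generalized_tchakaloff {Ω : Type*} [MeasurableSpace Ω]
    (μ : Measure Ω) [IsProbabilityMeasure μ] (D : ℕ) (hD : 0 < D)
    (φ : Ω → Fin D → ℝ) (hφ : Measurable φ) (hint : Integrable φ μ)
    (hone : ∀ ω, φ ω ⟨0, hD⟩ = 1) :
    ∃ n : ℕ, n ≤ D ∧ ∃ (x : Fin n → Ω) (l : Fin n → ℝ),
      (∀ j, 0 < l j) ∧ (∑ j, l j = 1) ∧
      (∀ i : Fin D, ∫ ω, φ ω i ∂μ = ∑ j, l j * φ (x j) i) ∧
      (∀ j, φ (x j) ∈ measureSupport (μ.map φ)) := by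
  set ν := μ.map φ
  have : IsProbabilityMeasure ν := Measure.isProbabilityMeasure_map hφ.aemeasurable
  have hE : IsThick ν (range φ ∩ ν.support) :=
    (isThick_map_range hφ).inter Measure.isClosed_support.measurableSet
      Measure.measure_compl_support
  have hm : ∫ ω, φ ω ∂μ ∈ convexHull ℝ (range φ ∩ ν.support) := by
    have hν : ∫ y, y ∂ν = ∫ ω, φ ω ∂μ := integral_map hφ.aemeasurable aestronglyMeasurable_id
    exact hν ▸ integral_id_mem_convexHull_of_isThick
      ((integrable_map_measure aestronglyMeasurable_id hφ.aemeasurable).2 hint) hE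
  obtain ⟨ι, _, z, w, hzE, hz, hw0, hw1, hwz⟩ := eq_pos_convex_span_of_mem_convexHull hm
  choose x hx using fun i => (hzE (mem_range_self i)).1
  have hcard : Fintype.card ι ≤ D := by
    simpa using (hz.linearIndependent_of_forall_eq_one (LinearMap.proj ⟨0, hD⟩)
      fun i => by simp [← hx i, hone]).fintype_card_le_finrank
  let e := (Fintype.equivFin ι).symm
  refine ⟨_, hcard, x ∘ e, w ∘ e, fun j => hw0 _, (e.sum_comp w).trans hw1, fun i => ?_,
    fun j => ?_⟩
  · rw [← eval_integral hint.eval, ← hwz, Finset.sum_apply, ← e.sum_comp]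
    simp [hx]
  · rw [measureSupport_eq_support, Function.comp_apply, hx]
    exact (hzE (mem_range_self _)).2
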